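/- Let (X, μ) be a measure space and let R : X → X be a measurable, measure-preserving involution (R ∘ R = id and μ(R⁻¹(S)) = μ(S) for every measurable S). Suppose u, φ : X → ℝ are measurable functions such that the product φ·u is integrable, and u(R x) = -u(x), φ(R x) = -φ(x) for all x ∈ X. Let Ω ⊆ X be a measurable set with μ(Ω ∩ R⁻¹(Ω)) = 0 and μ(X \ (Ω ∪ R⁻¹(Ω))) = 0, and suppose φ(x)·u(x) > 0 for μ-a.e. x ∈ Ω and μ(Ω) > 0. Then ∫_X φ·u dμ = 2 ∫_Ω φ·u dμ > 0; in particular ∫_X φ·u dμ ≠ 0, so u is not L²(μ)-orthogonal to φ. -/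

import Mathlib

/-!
The product `φ * u` of two `R`-anti-invariant functions is `R`-invariant, so, `R` being
measure-preserving, its integrals over `Ω` and over `R ⁻¹' Ω` agree. Since these two sets
partition `X` up to null sets, the total integral is twice the integral over `Ω`, which is
positive because the integrand is a.e. positive on a set of positive measure.
-/

open MeasureTheory

namespace MeasureTheory

variable {X : Type*} [MeasurableSpace X] {μ : Measure X}

theorem integral_pos_of_ae_pos {f : X → ℝ} (hfi : Integrable f μ) (hf : ∀ᵐ x ∂μ, 0 < f x)
    (hμ : μ ≠ 0) : 0 < ∫ x, f x ∂μ := by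
  refine (integral_pos_iff_support_of_nonneg_ae (hf.mono fun _ hx => hx.le) hfi).2 ?_
  have hsupp : Function.support f =ᵐ[μ] Set.univ :=
    ae_eq_univ.2 (ae_iff.1 (hf.mono fun _ hx => hx.ne'))
  rw [measure_congr hsupp]
  exact Measure.measure_univ_pos.2 hμ

theorem MeasurePreserving.setIntegral_preimage_of_comp_eq {E : Type*} [NormedAddCommGroup E]
    [NormedSpace ℝ E] {R : X → X} {f : X → E} {s : Set X} (hR : MeasurePreserving R μ μ)
    (hf : AEStronglyMeasurable f μ) (hfR : ∀ x, f (R x) = f x) (hs : MeasurableSet s) :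
    ∫ x in R ⁻¹' s, f x ∂μ = ∫ x in s, f x ∂μ := by
  have hf' : AEStronglyMeasurable f (Measure.map R μ) := by rwa [hR.map_eq]
  rw [← setIntegral_congr_fun (hR.measurable hs) fun x _ => hfR x,
    ← setIntegral_map hs hf' hR.aemeasurable, hR.map_eq]

theorem MeasurePreserving.integral_eq_two_smul_setIntegral_of_comp_eq {E : Type*}
    [NormedAddCommGroup E] [NormedSpace ℝ E] {R : X → X} {f : X → E} {s : Set X}
    (hR : MeasurePreserving R μ μ) (hf : Integrable f μ) (hfR : ∀ x, f (R x) = f x)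
    (hs : MeasurableSet s) (hdisj : μ (s ∩ R ⁻¹' s) = 0) (hcover : μ ((s ∪ R ⁻¹' s)ᶜ) = 0) :
    ∫ x, f x ∂μ = (2 : ℝ) • ∫ x in s, f x ∂μ := by
  have hunion : (s ∪ R ⁻¹' s : Set X) =ᵐ[μ] (Set.univ : Set X) := ae_eq_univ.2 hcover
  calc ∫ x, f x ∂μ = ∫ x in s ∪ R ⁻¹' s, f x ∂μ := by
        rw [setIntegral_congr_set hunion, setIntegral_univ]
    _ = ∫ x in s, f x ∂μ + ∫ x in R ⁻¹' s, f x ∂μ :=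
        setIntegral_union₀ hdisj (hR.measurable hs).nullMeasurableSet hf.integrableOn
          hf.integrableOn
    _ = (2 : ℝ) • ∫ x in s, f x ∂μ := by
        rw [hR.setIntegral_preimage_of_comp_eq hf.aestronglyMeasurable hfR hs, two_smul]

end MeasureTheory

theorem integral_eq_two_setIntegral_and_pos_of_antiInvariant_general
    {X : Type*} [MeasurableSpace X] (μ : Measure X) (R : X → X)
    (hRmeas : Measurable R)
    (hRpres : ∀ S : Set X, MeasurableSet S → μ (R ⁻¹' S) = μ S)
    (u φ : X → ℝ)
    (hint : Integrable (fun x => φ x * u x) μ)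
    (hu : ∀ x, u (R x) = -u x) (hφ : ∀ x, φ (R x) = -φ x)
    (Ω : Set X) (hΩmeas : MeasurableSet Ω)
    (hdisj : μ (Ω ∩ R ⁻¹' Ω) = 0)
    (hcover : μ ((Ω ∪ R ⁻¹' Ω)ᶜ) = 0)
    (hpos : ∀ᵐ x ∂(μ.restrict Ω), 0 < φ x * u x)
    (hΩpos : 0 < μ Ω) :
    (∫ x, φ x * u x ∂μ = 2 * ∫ x in Ω, φ x * u x ∂μ) ∧
      (0 < ∫ x, φ x * u x ∂μ) ∧ (∫ x, φ x * u x ∂μ ≠ 0) := by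
  have hR : MeasurePreserving R μ μ :=
    ⟨hRmeas, Measure.ext fun S hS => by rw [Measure.map_apply hRmeas hS, hRpres S hS]⟩
  have hinv : ∀ x, φ (R x) * u (R x) = φ x * u x := fun x => by rw [hu, hφ, neg_mul_neg]
  have htwo : ∫ x, φ x * u x ∂μ = 2 * ∫ x in Ω, φ x * u x ∂μ := by
    rw [hR.integral_eq_two_smul_setIntegral_of_comp_eq hint hinv hΩmeas hdisj hcover, smul_eq_mul]
  have hΩint : 0 < ∫ x in Ω, φ x * u x ∂μ :=
    integral_pos_of_ae_pos hint.integrableOn hpos (Measure.restrict_eq_zero.not.2 hΩpos.ne')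
  have hint_pos : 0 < ∫ x, φ x * u x ∂μ := by rw [htwo]; positivity
  exact ⟨htwo, hint_pos, hint_pos.ne'⟩

/-- Measure-theoretic core of the boundary nodal domain principle (Lemma 3.1):
if `R` is a measurable measure-preserving involution, `u` and `φ` are `R`-anti-invariant
with `φ·u` integrable, and `Ω` is (up to measure zero) a fundamental domain for `R`
on which `φ·u > 0` a.e. with `μ Ω > 0`, then `∫ φ·u = 2 ∫_Ω φ·u > 0`. -/
theorem integral_eq_two_setIntegral_and_pos_of_antiInvariant
    {X : Type*} [MeasurableSpace X] (μ : Measure X) (R : X → X)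
    (hRmeas : Measurable R) (hRinv : R ∘ R = id)
    (hRpres : ∀ S : Set X, MeasurableSet S → μ (R ⁻¹' S) = μ S)
    (u φ : X → ℝ) (humeas : Measurable u) (hφmeas : Measurable φ)
    (hint : Integrable (fun x => φ x * u x) μ)
    (hu : ∀ x, u (R x) = -u x) (hφ : ∀ x, φ (R x) = -φ x)
    (Ω : Set X) (hΩmeas : MeasurableSet Ω)
    (hdisj : μ (Ω ∩ R ⁻¹' Ω) = 0)
    (hcover : μ ((Ω ∪ R ⁻¹' Ω)ᶜ) = 0)
    (hpos : ∀ᵐ x ∂(μ.restrict Ω), 0 < φ x * u x)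
    (hΩpos : 0 < μ Ω) :
    (∫ x, φ x * u x ∂μ = 2 * ∫ x in Ω, φ x * u x ∂μ) ∧
      (0 < ∫ x, φ x * u x ∂μ) ∧ (∫ x, φ x * u x ∂μ ≠ 0) :=
  integral_eq_two_setIntegral_and_pos_of_antiInvariant_general μ R hRmeas hRpres u φ hint hu hφ Ω
    hΩmeas hdisj hcover hpos hΩpos
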